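/- Assume that for each T > 0 and t ≥ T the map (ξ₁,ξ₂) ↦ l(t−T,t,ξ₁,ξ₂,u) is twice continuously differentiable. If there exist T > 0, μ > 0 and R > 0 such that for all t ≥ T and all (ξ₁,ξ₂) ∈ B̄(x(t−T),R)² one has d²_{ξ₂}l(t−T,t,ξ₁,ξ₂,u)(v,v) ≥ μ‖v‖² for all v ∈ ℝ^{n_x}, then u is weakly regularly persistent at x₀; indeed l(t−T,t,ξ₁,ξ₂,u) ≥ (μ/2)‖ξ₁−ξ₂‖² for all t ≥ T and all ξ₁, ξ₂ ∈ B̄(x(t−T),R). -/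

import Mathlib

open MeasureTheory Metric Set Filter

/-- State space `ℝ^n` with the Euclidean norm. -/
abbrev Vec (n : ℕ) := EuclideanSpace ℝ (Fin n)

/-- Cumulative output error
`l(t₁,t₂,ξ₁,ξ₂,u) = ∫_{t₁}^{t₂} ‖h(φ(s;t₁,ξ₁,u),u(s)) − h(φ(s;t₁,ξ₂,u),u(s))‖² ds`. -/
noncomputable def cumError {nx nu ny : ℕ}
    (h : Vec nx → Vec nu → Vec ny) (φ : ℝ → ℝ → Vec nx → Vec nx)
    (u : ℝ → Vec nu) (t₁ t₂ : ℝ) (ξ₁ ξ₂ : Vec nx) : ℝ :=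
  ∫ s in t₁..t₂, ‖h (φ s t₁ ξ₁) (u s) - h (φ s t₁ ξ₂) (u s)‖ ^ 2

/-- A `𝒦`-function: continuous, strictly increasing on `[0,∞)`, vanishing at `0`. -/
def IsKFunction (κ : ℝ → ℝ) : Prop :=
  ContinuousOn κ (Set.Ici 0) ∧ StrictMonoOn κ (Set.Ici 0) ∧ κ 0 = 0

/-- Weakly regularly persistent input trajectory at `x₀`. -/
def WeaklyRegularlyPersistentAt {nx nu ny : ℕ}
    (h : Vec nx → Vec nu → Vec ny) (φ : ℝ → ℝ → Vec nx → Vec nx)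
    (u : ℝ → Vec nu) (x₀ : Vec nx) : Prop :=
  ∃ T > (0 : ℝ), ∃ R > (0 : ℝ), ∃ κ : ℝ → ℝ, IsKFunction κ ∧
    ∀ t ≥ T, ∀ ξ₁ ∈ Metric.closedBall (φ (t - T) 0 x₀) R,
      ∀ ξ₂ ∈ Metric.closedBall (φ (t - T) 0 x₀) R,
        κ ‖ξ₁ - ξ₂‖ ≤ cumError h φ u (t - T) t ξ₁ ξ₂

/-- Second Fréchet derivative of `ξ ↦ l(t₁,t₂,ξ₁,ξ,u)` at `ξ₂`, as a bilinear form. -/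
noncomputable def d2l {nx nu ny : ℕ}
    (h : Vec nx → Vec nu → Vec ny) (φ : ℝ → ℝ → Vec nx → Vec nx)
    (u : ℝ → Vec nu) (t₁ t₂ : ℝ) (ξ₁ ξ₂ v w : Vec nx) : ℝ :=
  iteratedFDeriv ℝ 2 (fun ξ => cumError h φ u t₁ t₂ ξ₁ ξ) ξ₂ ![v, w]

/-! The map `g = l(t−T, t, ξ₁, ·)` is nonnegative and vanishes at `ξ₁`, so `ξ₁` is a minimum and
`Dg(ξ₁) = 0`. On the segment from `ξ₁` to `ξ₂`, which stays in the convex ball, Taylor's formula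
with Lagrange remainder gives
`g ξ₂ = g ξ₁ + Dg(ξ₁)(ξ₂ − ξ₁) + ½ D²g(ζ)(ξ₂ − ξ₁, ξ₂ − ξ₁) ≥ (μ/2)‖ξ₁ − ξ₂‖²`,
and `r ↦ (μ/2) r²` is a 𝒦-function. -/

lemma add_deriv_mul_add_le_of_le_iteratedDeriv_two {ψ : ℝ → ℝ} (hψ : ContDiff ℝ 2 ψ)
    {x₀ x c : ℝ} (hc : ∀ s ∈ uIoo x₀ x, c ≤ iteratedDeriv 2 ψ s) :
    ψ x₀ + deriv ψ x₀ * (x - x₀) + c / 2 * (x - x₀) ^ 2 ≤ ψ x := by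
  rcases eq_or_ne x₀ x with rfl | hx
  · simp
  obtain ⟨s, hs, hrem⟩ := taylor_mean_remainder_lagrange_iteratedDeriv hx hψ.contDiffOn
  have htaylor : taylorWithinEval ψ 1 (uIcc x₀ x) x₀ x = ψ x₀ + deriv ψ x₀ * (x - x₀) := by
    rw [taylorWithinEval_succ, taylor_within_zero_eval, zero_add,
      iteratedDerivWithin_eq_iteratedDeriv (uniqueDiffOn_uIcc hx)
        (hψ.contDiffAt.of_le (by norm_num)) left_mem_uIcc, iteratedDeriv_one]
    simp [mul_comm]
  rw [htaylor] at hrem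
  simp only [Nat.reduceAdd, Nat.factorial_two, Nat.cast_ofNat] at hrem
  have hbound := mul_le_mul_of_nonneg_right (hc s hs) (sq_nonneg (x - x₀))
  linarith

lemma iteratedDeriv_comp_add_smul {E F : Type*} [NormedAddCommGroup E] [NormedSpace ℝ E]
    [NormedAddCommGroup F] [NormedSpace ℝ F] {g : E → F} {n : ℕ} (hg : ContDiff ℝ n g)
    (x v : E) (s : ℝ) :
    iteratedDeriv n (fun s : ℝ => g (x + s • v)) s =
      iteratedFDeriv ℝ n g (x + s • v) (fun _ => v) := by
  have hcomp : (fun s : ℝ => g (x + s • v)) =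
      (fun y => g (x + y)) ∘ ContinuousLinearMap.toSpanSingleton ℝ v := rfl
  have hshift : ContDiff ℝ n (fun y => g (x + y)) := hg.comp (contDiff_const.add contDiff_id)
  rw [iteratedDeriv_eq_iteratedFDeriv, hcomp,
    ContinuousLinearMap.iteratedFDeriv_comp_right _ hshift _ le_rfl, iteratedFDeriv_comp_add_left]
  simp

lemma add_fderiv_add_le_of_le_iteratedFDeriv_two {E : Type*} [NormedAddCommGroup E]
    [NormedSpace ℝ E] {g : E → ℝ} (hg : ContDiff ℝ 2 g) {S : Set E} (hS : Convex ℝ S)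
    {x y : E} (hx : x ∈ S) (hy : y ∈ S) {μ : ℝ}
    (hμ : ∀ z ∈ S, ∀ v, μ * ‖v‖ ^ 2 ≤ iteratedFDeriv ℝ 2 g z ![v, v]) :
    g x + fderiv ℝ g x (y - x) + μ / 2 * ‖y - x‖ ^ 2 ≤ g y := by
  have hline : ContDiff ℝ 2 (fun s : ℝ => g (x + s • (y - x))) :=
    hg.comp (contDiff_const.add (contDiff_id.smul contDiff_const))
  have hsecond : ∀ s ∈ uIoo (0 : ℝ) 1,
      μ * ‖y - x‖ ^ 2 ≤ iteratedDeriv 2 (fun s : ℝ => g (x + s • (y - x))) s := by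
    intro s hs
    rw [uIoo_of_le zero_le_one] at hs
    have hpair : (fun _ : Fin 2 => y - x) = ![y - x, y - x] := by
      ext i; fin_cases i <;> rfl
    rw [iteratedDeriv_comp_add_smul hg, hpair]
    exact hμ _ (hS.add_smul_sub_mem hx hy (Ioo_subset_Icc_self hs)) _
  have hfirst : deriv (fun s : ℝ => g (x + s • (y - x))) 0 = fderiv ℝ g x (y - x) := by
    rw [← iteratedDeriv_one, iteratedDeriv_comp_add_smul (hg.of_le (by norm_num)),
      iteratedFDeriv_one_apply, zero_smul, add_zero]
  have htaylor := add_deriv_mul_add_le_of_le_iteratedDeriv_two hline hsecond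
  simp only [zero_smul, add_zero, one_smul, add_sub_cancel, hfirst, sub_zero, mul_one,
    one_pow] at htaylor
  linarith

section CumError

variable {nx nu ny : ℕ} (h : Vec nx → Vec nu → Vec ny) (φ : ℝ → ℝ → Vec nx → Vec nx)
  (u : ℝ → Vec nu)

lemma cumError_nonneg {t₁ t₂ : ℝ} (hle : t₁ ≤ t₂) (ξ₁ ξ₂ : Vec nx) :
    0 ≤ cumError h φ u t₁ t₂ ξ₁ ξ₂ :=
  intervalIntegral.integral_nonneg hle fun _ _ => by positivity

lemma cumError_self (t₁ t₂ : ℝ) (ξ : Vec nx) : cumError h φ u t₁ t₂ ξ ξ = 0 := by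
  simp [cumError]

lemma mul_sq_norm_sub_le_cumError_of_le_d2l {t₁ t₂ : ℝ} (hle : t₁ ≤ t₂) {ξ₁ ξ₂ : Vec nx}
    (hC2 : ContDiff ℝ 2 (fun ξ => cumError h φ u t₁ t₂ ξ₁ ξ)) {S : Set (Vec nx)}
    (hS : Convex ℝ S) (hξ₁ : ξ₁ ∈ S) (hξ₂ : ξ₂ ∈ S) {μ : ℝ}
    (hμ : ∀ ξ ∈ S, ∀ v, μ * ‖v‖ ^ 2 ≤ d2l h φ u t₁ t₂ ξ₁ ξ v v) :
    μ / 2 * ‖ξ₁ - ξ₂‖ ^ 2 ≤ cumError h φ u t₁ t₂ ξ₁ ξ₂ := by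
  have hmin : IsLocalMin (fun ξ => cumError h φ u t₁ t₂ ξ₁ ξ) ξ₁ :=
    Eventually.of_forall fun ξ => (cumError_self h φ u t₁ t₂ ξ₁).trans_le
      (cumError_nonneg h φ u hle ξ₁ ξ)
  have htaylor := add_fderiv_add_le_of_le_iteratedFDeriv_two hC2 hS hξ₁ hξ₂ hμ
  rwa [cumError_self, hmin.fderiv_eq_zero, zero_apply, zero_add, zero_add,
    norm_sub_rev] at htaylor

end CumError

lemma isKFunction_const_mul_sq {c : ℝ} (hc : 0 < c) : IsKFunction (fun r => c * r ^ 2) :=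
  ⟨(continuous_const.mul (continuous_pow 2)).continuousOn,
    fun _ ha _ _ hab => mul_lt_mul_of_pos_left (pow_lt_pow_left₀ hab ha two_ne_zero) hc,
    by simp⟩

theorem stmt8_general {nx nu ny : ℕ}
    (h : Vec nx → Vec nu → Vec ny)
    (u : ℝ → Vec nu) (φ : ℝ → ℝ → Vec nx → Vec nx) (x₀ : Vec nx)
    (hC2 : ∀ T > (0 : ℝ), ∀ t ≥ T,
      ContDiff ℝ 2 (fun p : Vec nx × Vec nx => cumError h φ u (t - T) t p.1 p.2))
    (T μ R : ℝ) (hT : 0 < T) (hμ : 0 < μ) (hR : 0 < R)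
    (hlb : ∀ t ≥ T, ∀ ξ₁ ∈ Metric.closedBall (φ (t - T) 0 x₀) R,
      ∀ ξ₂ ∈ Metric.closedBall (φ (t - T) 0 x₀) R,
        ∀ v : Vec nx, μ * ‖v‖ ^ 2 ≤ d2l h φ u (t - T) t ξ₁ ξ₂ v v) :
    WeaklyRegularlyPersistentAt h φ u x₀ ∧
    ∀ t ≥ T, ∀ ξ₁ ∈ Metric.closedBall (φ (t - T) 0 x₀) R,
      ∀ ξ₂ ∈ Metric.closedBall (φ (t - T) 0 x₀) R,
        (μ / 2) * ‖ξ₁ - ξ₂‖ ^ 2 ≤ cumError h φ u (t - T) t ξ₁ ξ₂ := by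
  have hquad : ∀ t ≥ T, ∀ ξ₁ ∈ Metric.closedBall (φ (t - T) 0 x₀) R,
      ∀ ξ₂ ∈ Metric.closedBall (φ (t - T) 0 x₀) R,
        (μ / 2) * ‖ξ₁ - ξ₂‖ ^ 2 ≤ cumError h φ u (t - T) t ξ₁ ξ₂ := by
    intro t ht ξ₁ hξ₁ ξ₂ hξ₂
    have hsection := (hC2 T hT t ht).comp (contDiff_prodMk_right ξ₁)
    exact mul_sq_norm_sub_le_cumError_of_le_d2l h φ u (by linarith) hsection
      (convex_closedBall _ _) hξ₁ hξ₂ (hlb t ht ξ₁ hξ₁)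
  exact ⟨⟨T, hT, R, hR, fun r => μ / 2 * r ^ 2, isKFunction_const_mul_sq (half_pos hμ), hquad⟩,
    hquad⟩

/-- a time-uniform lower bound `μ‖v‖²` on the Hessian of the MHE cost
near `x(t−T)` implies weak regular persistence, with the explicit quadratic
lower bound `l ≥ (μ/2)‖ξ₁−ξ₂‖²`. -/
theorem stmt8 {nx nu ny : ℕ}
    (f : Vec nx → Vec nu → Vec nx) (h : Vec nx → Vec nu → Vec ny)
    (u : ℝ → Vec nu) (φ : ℝ → ℝ → Vec nx → Vec nx) (x₀ : Vec nx)
    (hf : ContDiff ℝ 2 (Function.uncurry f))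
    (hh : ContDiff ℝ 2 (Function.uncurry h))
    (hflow_init : ∀ s₁ : ℝ, 0 ≤ s₁ → ∀ ξ, φ s₁ s₁ ξ = ξ)
    (hflow_ode : ∀ s₁ s : ℝ, 0 ≤ s₁ → s₁ ≤ s → ∀ ξ,
      HasDerivAt (fun τ => φ τ s₁ ξ) (f (φ s s₁ ξ) (u s)) s)
    (hC2 : ∀ T > (0 : ℝ), ∀ t ≥ T,
      ContDiff ℝ 2 (fun p : Vec nx × Vec nx => cumError h φ u (t - T) t p.1 p.2))
    (T μ R : ℝ) (hT : 0 < T) (hμ : 0 < μ) (hR : 0 < R)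
    (hlb : ∀ t ≥ T, ∀ ξ₁ ∈ Metric.closedBall (φ (t - T) 0 x₀) R,
      ∀ ξ₂ ∈ Metric.closedBall (φ (t - T) 0 x₀) R,
        ∀ v : Vec nx, μ * ‖v‖ ^ 2 ≤ d2l h φ u (t - T) t ξ₁ ξ₂ v v) :
    WeaklyRegularlyPersistentAt h φ u x₀ ∧
    ∀ t ≥ T, ∀ ξ₁ ∈ Metric.closedBall (φ (t - T) 0 x₀) R,
      ∀ ξ₂ ∈ Metric.closedBall (φ (t - T) 0 x₀) R,
        (μ / 2) * ‖ξ₁ - ξ₂‖ ^ 2 ≤ cumError h φ u (t - T) t ξ₁ ξ₂ :=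
  stmt8_general h u φ x₀ hC2 T μ R hT hμ hR hlb
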